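/- Let n be a positive natural number and β a real number such that β - n + 1 is not a nonpositive integer (i.e. β - n + 1 ≠ -k for every natural number k). Then ∑_{k=1}^{n} (-1)^(k-1) / (k · (n-k)! · Γ(β - n + k + 1)) = (ψ(β+1) - ψ(β-n+1)) / (n! · Γ(β - n + 1)), where ψ denotes the digamma function. -/

import Mathlib

/-!
Put `x = β - n + 1`. Then `Γ(β - n + k + 1) = (x)ₖ Γ(x)` with `(x)ₖ` the rising factorial, and
`ψ(β + 1) - ψ(x) = ∑_{j<n} 1/(x + j)`, so after multiplying by `n! Γ(x)` the identity reads
`∑_{k=1}^n (-1)^(k-1) n^{(k)} / (k (x)ₖ) = ∑_{j<n} 1/(x + j)`, with `n^{(k)}` the falling factorial.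
Going from `n` to `n + 1`, the rule `(n+1)^{(k)} = n^{(k)} + k n^{(k-1)}` reduces this to
`∑_{m=0}^n (-1)^m n^{(m)} / (x)_{m+1} = 1/(x + n)`, which telescopes.
-/

/-- The digamma function `ψ(x) = Γ'(x)/Γ(x)`. -/
noncomputable def digamma (x : ℝ) : ℝ := deriv Real.Gamma x / Real.Gamma x

open Finset Polynomial Filter Topology Nat

theorem add_natCast_ne_neg_natCast {R : Type*} [Ring R] {x : R} (hx : ∀ m : ℕ, x ≠ -m)
    (k : ℕ) : ∀ m : ℕ, x + k ≠ -m := fun m h =>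
  hx (m + k) (by rw [Nat.cast_add, neg_add, ← h]; abel)

theorem add_natCast_ne_zero {R : Type*} [Ring R] {x : R} (hx : ∀ m : ℕ, x ≠ -m) (k : ℕ) :
    x + k ≠ 0 := by
  simpa using add_natCast_ne_neg_natCast hx k 0

theorem digamma_add_one {x : ℝ} (hx : ∀ m : ℕ, x ≠ -m) :
    digamma (x + 1) = digamma x + x⁻¹ := by
  have hx0 : x ≠ 0 := by simpa using hx 0
  have hx1 : ∀ m : ℕ, x + 1 ≠ -m := by exact_mod_cast add_natCast_ne_neg_natCast hx 1
  have hshift : (fun y => Real.Gamma (y + 1)) =ᶠ[𝓝 x] fun y => y * Real.Gamma y :=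
    (eventually_ne_nhds hx0).mono fun y hy => Real.Gamma_add_one hy
  have hcomp : digamma (x + 1) = logDeriv (fun y => Real.Gamma (y + 1)) x := by
    have h := logDeriv_comp (f := Real.Gamma) (g := fun y => y + 1)
      (Real.differentiableAt_Gamma hx1) (differentiableAt_id.add_const 1)
    simp only [deriv_add_const', deriv_id'', mul_one] at h
    exact h.symm
  rw [hcomp, (logDeriv_congr_nhds hshift).eq_of_nhds, logDeriv_mul (f := fun y => y) x hx0
    (Real.Gamma_ne_zero hx) differentiableAt_fun_id (Real.differentiableAt_Gamma hx),
    logDeriv_id', one_div, add_comm]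
  rfl

theorem digamma_add_nat {x : ℝ} (hx : ∀ m : ℕ, x ≠ -m) (n : ℕ) :
    digamma (x + n) = digamma x + ∑ j ∈ range n, (x + j)⁻¹ := by
  induction n with
  | zero => simp
  | succ n ih =>
    rw [Nat.cast_succ, ← add_assoc, digamma_add_one (add_natCast_ne_neg_natCast hx n), ih,
      sum_range_succ, add_assoc]

theorem Real.Gamma_add_nat_eq_ascPochhammer_mul {x : ℝ} (hx : ∀ m : ℕ, x ≠ -m) (k : ℕ) :
    Real.Gamma (x + k) = (ascPochhammer ℝ k).eval x * Real.Gamma x := by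
  induction k with
  | zero => simp
  | succ k ih =>
    rw [Nat.cast_succ, ← add_assoc, Real.Gamma_add_one (add_natCast_ne_zero hx k), ih,
      ascPochhammer_succ_eval]
    ring

theorem ascPochhammer_eval_ne_zero {K : Type*} [Field K] {x : K} (hx : ∀ m : ℕ, x ≠ -m)
    (k : ℕ) : (ascPochhammer K k).eval x ≠ 0 := by
  rw [ne_eq, ascPochhammer_eval_eq_zero_iff]
  rintro ⟨m, -, hm⟩
  exact hx m (by rw [hm, neg_neg])

theorem Nat.cast_descFactorial_succ {R : Type*} [Ring R] (n k : ℕ) :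
    (n.descFactorial (k + 1) : R) = n.descFactorial k * (n - k) := by
  rw [← descPochhammer_eval_eq_descFactorial, ← descPochhammer_eval_eq_descFactorial,
    descPochhammer_succ_eval]

theorem sum_range_descFactorial_div_ascPochhammer {K : Type*} [Field K] {x : K}
    (hx : ∀ m : ℕ, x ≠ -m) (n : ℕ) :
    ∑ m ∈ range (n + 1), (-1) ^ m * n.descFactorial m / (ascPochhammer K (m + 1)).eval x =
      (x + n)⁻¹ := by
  have hxn := add_natCast_ne_zero hx n
  -- `b m - b (m + 1)` is the `m`-th summand because `(x + m) + (n - m) = x + n`.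
  set b : ℕ → K := fun m => (-1) ^ m * n.descFactorial m / ((ascPochhammer K m).eval x * (x + n))
  have hterm : ∀ m, (-1) ^ m * n.descFactorial m / (ascPochhammer K (m + 1)).eval x =
      b m - b (m + 1) := by
    intro m
    have hxm := add_natCast_ne_zero hx m
    have hP := ascPochhammer_eval_ne_zero hx m
    simp only [b, ascPochhammer_succ_eval, Nat.cast_descFactorial_succ]
    field_simp
    ring
  rw [sum_congr rfl fun m _ => hterm m, sum_range_sub']
  simp [b]

theorem sum_range_descFactorial_div_mul_ascPochhammer {K : Type*} [Field K] [CharZero K] {x : K}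
    (hx : ∀ m : ℕ, x ≠ -m) (n : ℕ) :
    ∑ m ∈ range n, (-1) ^ m * n.descFactorial (m + 1) /
        ((m + 1) * (ascPochhammer K (m + 1)).eval x) = ∑ j ∈ range n, (x + j)⁻¹ := by
  induction n with
  | zero => simp
  | succ n ih =>
    have hsplit : ∀ m, (-1) ^ m * ((n + 1).descFactorial (m + 1) : K) /
          ((m + 1) * (ascPochhammer K (m + 1)).eval x) =
        (-1) ^ m * n.descFactorial (m + 1) / ((m + 1) * (ascPochhammer K (m + 1)).eval x) +
          (-1) ^ m * n.descFactorial m / (ascPochhammer K (m + 1)).eval x := by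
      intro m
      have hP := ascPochhammer_eval_ne_zero hx (m + 1)
      rw [Nat.succ_descFactorial_succ, Nat.cast_descFactorial_succ]
      field_simp
      push_cast
      ring
    rw [sum_congr rfl fun m _ => hsplit m, sum_add_distrib,
      sum_range_descFactorial_div_ascPochhammer hx, sum_range_succ, ih, sum_range_succ]
    simp

theorem sum_digamma_identity_general (n : ℕ) (β : ℝ)
    (hβ : ∀ k : ℕ, β - n + 1 ≠ -k) :
    (∑ k ∈ Finset.Icc 1 n,
        (-1 : ℝ) ^ (k - 1) /
          (k * (Nat.factorial (n - k)) * Real.Gamma (β - n + k + 1))) =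
      (digamma (β + 1) - digamma (β - n + 1)) /
        (Nat.factorial n * Real.Gamma (β - n + 1)) := by
  set x := β - n + 1
  have hterm : ∀ m ∈ range n, (-1 : ℝ) ^ m / (((m + 1 : ℕ) : ℝ) * (n - (m + 1))! *
      Real.Gamma (β - n + (m + 1 : ℕ) + 1)) = (-1) ^ m * n.descFactorial (m + 1) /
        ((m + 1) * (ascPochhammer ℝ (m + 1)).eval x) / (n ! * Real.Gamma x) := by
    intro m hm
    have hfac : (n ! : ℝ) = (n - (m + 1))! * n.descFactorial (m + 1) := by
      exact_mod_cast (factorial_mul_descFactorial (mem_range.mp hm)).symm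
    have hΓ : Real.Gamma (β - n + (m + 1 : ℕ) + 1) = Real.Gamma (x + (m + 1 : ℕ)) := by
      congr 1; ring
    have hdesc : (n.descFactorial (m + 1) : ℝ) ≠ 0 := by
      exact_mod_cast (descFactorial_pos.mpr (mem_range.mp hm)).ne'
    have hP := ascPochhammer_eval_ne_zero hβ (m + 1)
    have hG := Real.Gamma_ne_zero hβ
    rw [hΓ, Real.Gamma_add_nat_eq_ascPochhammer_mul hβ, hfac]
    field_simp
    push_cast
    ring
  calc
    _ = ∑ m ∈ range n, (-1 : ℝ) ^ m / (((m + 1 : ℕ) : ℝ) * (n - (m + 1))! *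
          Real.Gamma (β - n + (m + 1 : ℕ) + 1)) := by
      rw [← Ico_add_one_right_eq_Icc, sum_Ico_eq_sum_range, add_tsub_cancel_right]
      simp only [add_comm 1, add_tsub_cancel_right]
    _ = (∑ j ∈ range n, (x + j)⁻¹) / (n ! * Real.Gamma x) := by
      rw [sum_congr rfl hterm, ← sum_div, sum_range_descFactorial_div_mul_ascPochhammer hβ]
    _ = _ := by
      rw [show β + 1 = x + n by ring, digamma_add_nat hβ, add_sub_cancel_left]

/-- The finite-sum identity
`∑_{k=1}^{n} (-1)^(k-1) / (k (n-k)! Γ(β-n+k+1)) = (ψ(β+1) - ψ(β-n+1)) / (n! Γ(β-n+1))`,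
for `n ≥ 1` and `β - n + 1` not a nonpositive integer. -/
theorem sum_digamma_identity (n : ℕ) (hn : 0 < n) (β : ℝ)
    (hβ : ∀ k : ℕ, β - n + 1 ≠ -k) :
    (∑ k ∈ Finset.Icc 1 n,
        (-1 : ℝ) ^ (k - 1) /
          (k * (Nat.factorial (n - k)) * Real.Gamma (β - n + k + 1))) =
      (digamma (β + 1) - digamma (β - n + 1)) /
        (Nat.factorial n * Real.Gamma (β - n + 1)) :=
  sum_digamma_identity_general n β hβ
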